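/- arXiv:1207.7015 — 4 statements merged into one kernel-verified Lean document; each statement's English description precedes it below -/
import Mathlib

section
/- The function x ↦ exp(−|x|) on ℝ is positive definite: for all x₁,…,xₙ ∈ ℝ and reals c₁,…,cₙ, ∑ᵢ∑ⱼ cᵢ cⱼ exp(−|xᵢ − xⱼ|) ≥ 0. -/
open Finset Real

def IsVariogram {d : ℕ} (γ : (Fin d → ℝ) → ℝ) : Prop :=
  γ 0 = 0 ∧ (∀ ξ, γ (-ξ) = γ ξ) ∧
  ∀ (n : ℕ) (x : Fin n → (Fin d → ℝ)) (c : Fin n → ℝ),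
    (∑ i, c i) = 0 → (∑ i, ∑ j, c i * c j * γ (x i - x j)) ≤ 0

def IsPosDef {d : ℕ} (f : (Fin d → ℝ) → ℝ) : Prop :=
  ∀ (n : ℕ) (x : Fin n → (Fin d → ℝ)) (c : Fin n → ℝ),
    0 ≤ ∑ i, ∑ j, c i * c j * f (x i - x j)

def IsPosDef1 (f : ℝ → ℝ) : Prop :=
  ∀ (n : ℕ) (x : Fin n → ℝ) (c : Fin n → ℝ),
    0 ≤ ∑ i, ∑ j, c i * c j * f (x i - x j)

def IsVariogram1 (γ : ℝ → ℝ) : Prop :=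
  γ 0 = 0 ∧ (∀ x, γ (-x) = γ x) ∧
  ∀ (n : ℕ) (x : Fin n → ℝ) (c : Fin n → ℝ),
    (∑ i, c i) = 0 → (∑ i, ∑ j, c i * c j * γ (x i - x j)) ≤ 0

noncomputable def ind {d : ℕ} : (Fin d → ℝ) → ℝ := fun ξ => if ξ = 0 then 0 else 1

open MeasureTheory Set

lemma term_integral (a b C : ℝ) :
    ∫ u : ℝ, (C * Real.exp u) * ((Set.Iic (2*a)).indicator 1 u * (Set.Iic (2*b)).indicator 1 u)
      = C * Real.exp (2 * min a b) := by
  have h1 : ∀ u : ℝ, (Set.Iic (2*a)).indicator (1 : ℝ → ℝ) u * (Set.Iic (2*b)).indicator 1 u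
      = (Set.Iic (2 * min a b)).indicator 1 u := by
    intro u
    have hm : 2 * min a b = min (2*a) (2*b) := by
      rcases le_total a b with h | h <;> simp [min_eq_left, min_eq_right, h, mul_le_mul_left]
    by_cases ha : u ≤ 2*a <;> by_cases hb : u ≤ 2*b <;>
      simp [Set.indicator_apply, Set.mem_Iic, hm, le_min_iff, ha, hb]
  simp_rw [h1]
  have : ∀ u : ℝ, (C * Real.exp u) * (Set.Iic (2 * min a b)).indicator 1 u
      = (Set.Iic (2 * min a b)).indicator (fun u => C * Real.exp u) u := by
    intro u
    by_cases h : u ∈ Set.Iic (2 * min a b) <;> simp [Set.indicator_of_mem, Set.indicator_of_notMem, h]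
  simp_rw [this]
  rw [MeasureTheory.integral_indicator measurableSet_Iic,
      MeasureTheory.integral_const_mul, integral_exp_Iic]

lemma term_integrable (a b C : ℝ) :
    Integrable (fun u : ℝ => (C * Real.exp u) * ((Set.Iic (2*a)).indicator 1 u * (Set.Iic (2*b)).indicator 1 u)) := by
  have h1 : ∀ u : ℝ, (C * Real.exp u) * ((Set.Iic (2*a)).indicator (1:ℝ→ℝ) u * (Set.Iic (2*b)).indicator 1 u)
      = (Set.Iic (min (2*a) (2*b))).indicator (fun u => C * Real.exp u) u := by
    intro u
    by_cases ha : u ≤ 2*a <;> by_cases hb : u ≤ 2*b <;>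
      simp [Set.indicator_apply, Set.mem_Iic, le_min_iff, ha, hb]
  simp_rw [h1]
  rw [integrable_indicator_iff measurableSet_Iic]
  exact ((integrableOn_exp_Iic _).const_mul C)

theorem stmt3 (n : ℕ) (x : Fin n → ℝ) (c : Fin n → ℝ) :
    0 ≤ ∑ i, ∑ j, c i * c j * Real.exp (-|x i - x j|) := by
  set g : ℝ → ℝ := fun u => ∑ i, (c i * Real.exp (-(x i))) * (Set.Iic (2 * x i)).indicator 1 u
    with hg
  have habs : ∀ i j, c i * c j * Real.exp (-|x i - x j|)
      = (c i * Real.exp (-(x i)) * (c j * Real.exp (-(x j)))) * Real.exp (2 * min (x i) (x j)) := by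
    intro i j
    have h2 : Real.exp (-(x i)) * (Real.exp (-(x j)) * Real.exp (2 * min (x i) (x j)))
        = Real.exp (-|x i - x j|) := by
      rw [← Real.exp_add, ← Real.exp_add]
      congr 1
      rcases le_total (x i) (x j) with h | h
      · rw [min_eq_left h, abs_of_nonpos (by linarith)]; ring
      · rw [min_eq_right h, abs_of_nonneg (by linarith)]; ring
    rw [← h2]; ring
  have key : ∀ i j, c i * c j * Real.exp (-|x i - x j|)
      = ∫ u : ℝ, ((c i * Real.exp (-(x i)) * (c j * Real.exp (-(x j)))) * Real.exp u) *
          ((Set.Iic (2 * x i)).indicator 1 u * (Set.Iic (2 * x j)).indicator 1 u) := by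
    intro i j
    rw [term_integral, habs]
  have hpt : ∀ u : ℝ, Real.exp u * (g u)^2
      = ∑ i, ∑ j, ((c i * Real.exp (-(x i)) * (c j * Real.exp (-(x j)))) * Real.exp u) *
          ((Set.Iic (2 * x i)).indicator 1 u * (Set.Iic (2 * x j)).indicator 1 u) := by
    intro u
    rw [hg, sq, Finset.sum_mul_sum, Finset.mul_sum]
    refine Finset.sum_congr rfl fun i _ => ?_
    rw [Finset.mul_sum]
    refine Finset.sum_congr rfl fun j _ => ?_
    ring
  have hsum : (∑ i, ∑ j, c i * c j * Real.exp (-|x i - x j|))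
      = ∫ u : ℝ, Real.exp u * (g u)^2 := by
    calc (∑ i, ∑ j, c i * c j * Real.exp (-|x i - x j|))
        = ∑ i, ∫ u : ℝ, ∑ j, ((c i * Real.exp (-(x i)) * (c j * Real.exp (-(x j)))) * Real.exp u) *
            ((Set.Iic (2 * x i)).indicator 1 u * (Set.Iic (2 * x j)).indicator 1 u) := by
          refine Finset.sum_congr rfl fun i _ => ?_
          rw [MeasureTheory.integral_finset_sum _ fun j _ => term_integrable _ _ _]
          exact Finset.sum_congr rfl fun j _ => key i j
      _ = ∫ u : ℝ, ∑ i, ∑ j, ((c i * Real.exp (-(x i)) * (c j * Real.exp (-(x j)))) * Real.exp u) *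
            ((Set.Iic (2 * x i)).indicator 1 u * (Set.Iic (2 * x j)).indicator 1 u) :=
          (MeasureTheory.integral_finset_sum _ fun i _ =>
            MeasureTheory.integrable_finset_sum _ fun j _ => term_integrable _ _ _).symm
      _ = ∫ u : ℝ, Real.exp u * (g u)^2 := by
          congr 1; ext u; rw [hpt u]
  rw [hsum]
  exact MeasureTheory.integral_nonneg fun u => by positivity
end

section
/- (Schoenberg) A symmetric function γ : ℝ^d → ℝ with γ(0) = 0 is conditionally negative definite if and only if for every t > 0 the function ξ ↦ exp(−t·γ(ξ)) is positive definite. -/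
open Finset Real

/-! If `γ` is conditionally negative definite, `γ 0 = 0` and `γ` is even, then the matrix
`ψ i j = γ (x i) + γ (x j) - γ (x i - x j)` is positive semidefinite: apply the definition to the
points `0, x 1, …, x n` with weights `-∑ c, c 1, …, c n`. By the Schur product theorem so are its
entrywise powers, hence, summing the exponential series, its entrywise exponential; and
`exp (-t γ (x i - x j)) = e i * e j * exp (t ψ i j)` with `e i = exp (-t γ (x i))`.
Conversely, for `∑ c = 0` the function `g t = ∑ c i c j exp (-t γ (x i - x j))` vanishes at `0` and
is nonnegative for `t > 0`, so `g' 0 = -∑ c i c j γ (x i - x j) ≥ 0`. -/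

def IsConditionallyNegativeDefinite {E : Type*} [AddGroup E] (γ : E → ℝ) : Prop :=
  ∀ (n : ℕ) (x : Fin n → E) (c : Fin n → ℝ),
    ∑ i, c i = 0 → ∑ i, ∑ j, c i * c j * γ (x i - x j) ≤ 0

def IsPositiveDefinite {E : Type*} [AddGroup E] (f : E → ℝ) : Prop :=
  ∀ (n : ℕ) (x : Fin n → E) (c : Fin n → ℝ), 0 ≤ ∑ i, ∑ j, c i * c j * f (x i - x j)

namespace Matrix

variable {ι : Type*} [Fintype ι]

lemma star_dotProduct_mulVec_eq_sum_sum {A : Matrix ι ι ℝ} (c : ι → ℝ) :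
    star c ⬝ᵥ (A *ᵥ c) = ∑ i, ∑ j, c i * c j * A i j := by
  simp only [star_trivial, dotProduct, mulVec, Finset.mul_sum]
  exact sum_congr rfl fun i _ => sum_congr rfl fun j _ => by ring

lemma posSemidef_iff_sum_sum_mul_nonneg {A : Matrix ι ι ℝ} :
    A.PosSemidef ↔ A.IsHermitian ∧ ∀ c : ι → ℝ, 0 ≤ ∑ i, ∑ j, c i * c j * A i j := by
  simp only [posSemidef_iff_dotProduct_mulVec, star_dotProduct_mulVec_eq_sum_sum]

open scoped ComplexOrder in
lemma PosSemidef.map_pow {𝕜 : Type*} [RCLike 𝕜] {A : Matrix ι ι 𝕜} (hA : A.PosSemidef) :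
    ∀ m : ℕ, (A.map (· ^ m)).PosSemidef
  | 0 => by
    convert posSemidef_vecMulVec_self_star (fun _ : ι => (1 : 𝕜)) using 1
    ext i j
    simp [vecMulVec]
  | m + 1 => by
    convert (hA.map_pow m).hadamard hA using 1
    ext i j
    simp [pow_succ]

lemma PosSemidef.map_exp {A : Matrix ι ι ℝ} (hA : A.PosSemidef) : (A.map Real.exp).PosSemidef := by
  refine posSemidef_iff_sum_sum_mul_nonneg.2 ⟨hA.isHermitian.map _ fun _ => rfl, fun c => ?_⟩
  have hexp : ∀ x : ℝ, HasSum (fun m : ℕ => (m.factorial : ℝ)⁻¹ * x ^ m) (Real.exp x) := by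
    intro x
    simpa [Real.exp_eq_exp_ℝ, div_eq_inv_mul] using NormedSpace.expSeries_div_hasSum_exp x
  have hsum : HasSum (fun m : ℕ => (m.factorial : ℝ)⁻¹ * ∑ i, ∑ j, c i * c j * A i j ^ m)
      (∑ i, ∑ j, c i * c j * Real.exp (A i j)) := by
    simp only [Finset.mul_sum]
    refine hasSum_sum fun i _ => hasSum_sum fun j _ => ?_
    simpa [mul_left_comm] using (hexp (A i j)).mul_left (c i * c j)
  exact hsum.nonneg fun m =>
    mul_nonneg (by positivity) ((posSemidef_iff_sum_sum_mul_nonneg.1 (hA.map_pow m)).2 c)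

end Matrix

lemma HasDerivWithinAt.nonneg_of_isMinOn_Ioi {g : ℝ → ℝ} {g' a : ℝ}
    (hg : HasDerivWithinAt g g' (Set.Ioi a) a) (hmin : IsMinOn g (Set.Ioi a) a) : 0 ≤ g' := by
  refine ge_of_tendsto ((hasDerivWithinAt_iff_tendsto_slope' Set.self_notMem_Ioi).1 hg) ?_
  filter_upwards [self_mem_nhdsWithin] with t ht
  rw [slope_def_field]
  exact div_nonneg (sub_nonneg.2 (hmin ht)) (sub_nonneg.2 (le_of_lt ht))

section Schoenberg

variable {E : Type*} [AddGroup E] {γ : E → ℝ}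

/-- Twice the Gromov products, based at `0`, of the points `x i` for the "distance" `γ (a - b)`. -/
def gromovMatrix (γ : E → ℝ) {n : ℕ} (x : Fin n → E) : Matrix (Fin n) (Fin n) ℝ :=
  Matrix.of fun i j => γ (x i) + γ (x j) - γ (x i - x j)

lemma IsConditionallyNegativeDefinite.posSemidef_gromovMatrix
    (hγ : IsConditionallyNegativeDefinite γ) (h0 : γ 0 = 0) (hsym : ∀ ξ, γ (-ξ) = γ ξ)
    {n : ℕ} (x : Fin n → E) : (gromovMatrix γ x).PosSemidef := by
  refine Matrix.posSemidef_iff_sum_sum_mul_nonneg.2 ⟨?_, fun c => ?_⟩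
  · refine Matrix.IsHermitian.ext fun i j => ?_
    simp only [gromovMatrix, Matrix.of_apply, star_trivial]
    rw [← neg_sub (x i) (x j), hsym]
    ring
  · have h := hγ (n + 1) (Fin.cons 0 x) (Fin.cons (-∑ i, c i) c) (by simp [Fin.sum_univ_succ])
    simp only [Fin.sum_univ_succ, Fin.cons_zero, Fin.cons_succ, zero_sub, sub_zero, h0,
      hsym] at h
    simp only [gromovMatrix, Matrix.of_apply, mul_sub, mul_add, sum_add_distrib, sum_sub_distrib]
    have hlin : ∀ a : ℝ, ∑ i, a * c i * γ (x i) = a * ∑ i, c i * γ (x i) ∧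
        ∑ i, c i * a * γ (x i) = a * ∑ i, c i * γ (x i) := fun a =>
      ⟨by rw [mul_sum]; exact sum_congr rfl fun i _ => by ring,
        by rw [mul_sum]; exact sum_congr rfl fun i _ => by ring⟩
    have hrow : ∑ i, ∑ j, c i * c j * γ (x i) = (∑ i, c i * γ (x i)) * ∑ j, c j := by
      rw [sum_mul_sum]; exact sum_congr rfl fun i _ => sum_congr rfl fun j _ => by ring
    have hcol : ∑ i, ∑ j, c i * c j * γ (x j) = (∑ i, c i * γ (x i)) * ∑ j, c j := by
      rw [sum_comm, ← hrow]; exact sum_congr rfl fun i _ => sum_congr rfl fun j _ => by ring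
    simp only [mul_zero, zero_add, sum_add_distrib, (hlin _).1, (hlin _).2] at h
    linarith

theorem IsConditionallyNegativeDefinite.isPositiveDefinite_exp
    (hγ : IsConditionallyNegativeDefinite γ) (h0 : γ 0 = 0) (hsym : ∀ ξ, γ (-ξ) = γ ξ)
    {t : ℝ} (ht : 0 ≤ t) : IsPositiveDefinite fun ξ => Real.exp (-t * γ ξ) := by
  intro n x c
  have hpsd := ((hγ.posSemidef_gromovMatrix h0 hsym x).smul ht).map_exp
  let w i := c i * Real.exp (-t * γ (x i))
  refine (Matrix.posSemidef_iff_sum_sum_mul_nonneg.1 hpsd).2 w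
    |>.trans_eq <| sum_congr rfl fun i _ => sum_congr rfl fun j _ => ?_
  simp only [gromovMatrix, Matrix.map_apply, Matrix.smul_apply, Matrix.of_apply, smul_eq_mul]
  rw [show ∀ a b u v w : ℝ, a * u * (b * v) * w = a * b * (u * v * w) by intros; ring,
    ← Real.exp_add, ← Real.exp_add]
  ring_nf

theorem IsConditionallyNegativeDefinite.of_isPositiveDefinite_exp
    (h : ∀ t : ℝ, 0 < t → IsPositiveDefinite fun ξ => Real.exp (-t * γ ξ)) :
    IsConditionallyNegativeDefinite γ := by
  intro n x c hc
  let g : ℝ → ℝ := fun t => ∑ i, ∑ j, c i * c j * Real.exp (-t * γ (x i - x j))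
  have hg0 : g 0 = 0 := by simp [g, ← Finset.sum_mul_sum, hc]
  have hg : HasDerivAt g (∑ i, ∑ j, c i * c j * -γ (x i - x j)) 0 := by
    refine HasDerivAt.fun_sum fun i _ => HasDerivAt.fun_sum fun j _ => ?_
    simpa using (((hasDerivAt_id (0 : ℝ)).neg.mul_const (γ (x i - x j))).exp).const_mul (c i * c j)
  have hmin : IsMinOn g (Set.Ioi 0) 0 := fun t ht => show g 0 ≤ g t by rw [hg0]; exact h t ht n x c
  have := hg.hasDerivWithinAt.nonneg_of_isMinOn_Ioi hmin
  simp only [mul_neg, sum_neg_distrib] at this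
  linarith

end Schoenberg

theorem stmt7 {d : ℕ} (γ : (Fin d → ℝ) → ℝ) (hsym : ∀ ξ, γ (-ξ) = γ ξ)
    (h0 : γ 0 = 0) :
    (∀ (n : ℕ) (x : Fin n → (Fin d → ℝ)) (c : Fin n → ℝ),
      (∑ i, c i) = 0 → (∑ i, ∑ j, c i * c j * γ (x i - x j)) ≤ 0) ↔
    (∀ t : ℝ, 0 < t → IsPosDef (fun ξ => Real.exp (-t * γ ξ))) :=
  ⟨fun hγ _ ht => IsConditionallyNegativeDefinite.isPositiveDefinite_exp hγ h0 hsym ht.le,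
    IsConditionallyNegativeDefinite.of_isPositiveDefinite_exp⟩
end

section
/- If γ : ℝ^d → ℝ is a variogram, then √γ satisfies the triangle inequality: √γ(ξ + η) ≤ √γ(ξ) + √γ(η) for all ξ, η ∈ ℝ^d. -/
open Finset Real

lemma aux_limit (A B C : ℝ) (hB : 0 ≤ B) (hC : 0 ≤ C)
    (key : ∀ s t : ℝ, 0 ≤ s → 0 ≤ t → s * t * C ≤ (s + t) * (s * A + t * B))
    (hA : A = 0) : C ≤ B := by
  refine le_of_forall_pos_le_add fun ε hε => ?_
  set s : ℝ := B / ε + 1 with hs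
  have hspos : 0 < s := by positivity
  have h1 := key s 1 hspos.le zero_le_one
  have hBs : B ≤ s * ε := by
    rw [hs]; rw [add_mul, div_mul_cancel₀ _ hε.ne']; linarith
  rw [hA] at h1
  nlinarith

theorem stmt13 {d : ℕ} (γ : (Fin d → ℝ) → ℝ) (h : IsVariogram γ)
    (ξ η : Fin d → ℝ) :
    Real.sqrt (γ (ξ + η)) ≤ Real.sqrt (γ ξ) + Real.sqrt (γ η) := by
  obtain ⟨h0, hsym, hneg⟩ := h
  -- nonnegativity
  have hnn : ∀ ζ : Fin d → ℝ, 0 ≤ γ ζ := by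
    intro ζ
    have := hneg 2 ![0, ζ] ![1, -1] (by simp)
    simp [Fin.sum_univ_two, h0] at this
    rw [hsym] at this
    linarith
  -- key inequality
  have key : ∀ s t : ℝ, 0 ≤ s → 0 ≤ t →
      s * t * γ (ξ + η) ≤ (s + t) * (s * γ ξ + t * γ η) := by
    intro s t hs ht
    have := hneg 3 ![0, ξ, ξ + η] ![s, -(s + t), t] (by simp [Fin.sum_univ_three])
    simp [Fin.sum_univ_three] at this
    have e2 : -η + -ξ = -(ξ + η) := by ring
    rw [e2, hsym ξ, hsym (ξ + η), hsym η, h0] at this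
    nlinarith [this]
  have hξ := hnn ξ
  have hη := hnn η
  have hξη := hnn (ξ + η)
  set a := Real.sqrt (γ ξ) with ha
  set b := Real.sqrt (γ η) with hb
  have ha2 : a ^ 2 = γ ξ := Real.sq_sqrt hξ
  have hb2 : b ^ 2 = γ η := Real.sq_sqrt hη
  have hanneg : 0 ≤ a := Real.sqrt_nonneg _
  have hbnneg : 0 ≤ b := Real.sqrt_nonneg _
  have main : γ (ξ + η) ≤ (a + b) ^ 2 := by
    rcases eq_or_lt_of_le hξ with hξ0 | hξ0
    · have hA : a = 0 := by rw [ha, ← hξ0, Real.sqrt_zero]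
      have : γ (ξ + η) ≤ γ η :=
        aux_limit (γ ξ) (γ η) (γ (ξ + η)) hη hξη key hξ0.symm
      nlinarith
    rcases eq_or_lt_of_le hη with hη0 | hη0
    · have hB : b = 0 := by rw [hb, ← hη0, Real.sqrt_zero]
      have key' : ∀ s t : ℝ, 0 ≤ s → 0 ≤ t →
          s * t * γ (ξ + η) ≤ (s + t) * (s * γ η + t * γ ξ) := by
        intro s t hs ht
        have := key t s ht hs
        nlinarith
      have : γ (ξ + η) ≤ γ ξ :=
        aux_limit (γ η) (γ ξ) (γ (ξ + η)) hξ hξη key' hη0.symm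
      nlinarith
    · have hapos : 0 < a := Real.sqrt_pos.mpr hξ0
      have hbpos : 0 < b := Real.sqrt_pos.mpr hη0
      have hthis := key b a hbnneg hanneg
      rw [← ha2, ← hb2] at hthis
      nlinarith [hthis, mul_pos hapos hbpos]
  calc Real.sqrt (γ (ξ + η)) ≤ Real.sqrt ((a + b) ^ 2) := Real.sqrt_le_sqrt main
    _ = a + b := Real.sqrt_sq (by positivity)
end

section
/- If γ is a variogram on ℝ^d bounded above by a constant M, then for all ξ, η ∈ ℝ^d, |γ(ξ) − γ(η)| ≤ γ(ξ − η) + 2√(M·γ(ξ − η)); in particular if γ(ξ − η) = 0 then γ(ξ) = γ(η). -/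
open Finset Real

/-!
The kernel `γ x + γ y - γ (x - y)` is positive semidefinite (test conditional negative definiteness
on the points `x, y, 0` with weights `t, 1, -(t + 1)`), so Cauchy–Schwarz gives
`(γ x + γ y - γ (x - y))² ≤ 4 γ x γ y`. Applied to the pair `ξ, ξ - η` this bounds
`γ ξ - γ η` by `2 √(γ ξ γ (ξ - η)) - γ (ξ - η)`, and `γ ξ ≤ M` finishes.
-/

namespace IsVariogram

variable {d : ℕ} {γ : (Fin d → ℝ) → ℝ}

lemma nonneg (h : IsVariogram γ) (x : Fin d → ℝ) : 0 ≤ γ x := by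
  obtain ⟨h0, hneg, hcnd⟩ := h
  have := hcnd 2 ![x, 0] ![1, -1] (by simp)
  simp only [Fin.sum_univ_two, Matrix.cons_val_zero, Matrix.cons_val_one, sub_self, sub_zero,
    zero_sub, h0, hneg] at this
  linarith

lemma map_sub_comm (h : IsVariogram γ) (x y : Fin d → ℝ) : γ (x - y) = γ (y - x) := by
  rw [← neg_sub, h.2.1]

lemma kernel_quadratic_nonneg (h : IsVariogram γ) (x y : Fin d → ℝ) (t : ℝ) :
    0 ≤ γ x * (t * t) + (γ x + γ y - γ (x - y)) * t + γ y := by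
  have := h.2.2 3 ![x, y, 0] ![t, 1, -(t + 1)] (by simp [Fin.sum_univ_three])
  simp only [Fin.sum_univ_three, Matrix.cons_val_zero, Matrix.cons_val_one, Matrix.cons_val_two,
    Matrix.tail_cons, Matrix.head_cons, sub_self, sub_zero, zero_sub, h.1, h.2.1] at this
  rw [h.map_sub_comm y x] at this
  linarith

lemma kernel_sq_le (h : IsVariogram γ) (x y : Fin d → ℝ) :
    (γ x + γ y - γ (x - y)) ^ 2 ≤ 4 * γ x * γ y := by
  have := discrim_le_zero (h.kernel_quadratic_nonneg x y)
  rw [discrim] at this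
  linarith

lemma add_sub_le_two_mul_sqrt (h : IsVariogram γ) (x y : Fin d → ℝ) :
    γ x + γ (x - y) - γ y ≤ 2 * √(γ x * γ (x - y)) := by
  have hsq := h.kernel_sq_le x (x - y)
  rw [sub_sub_cancel] at hsq
  have hsqrt : γ x + γ (x - y) - γ y ≤ √((2 : ℝ) ^ 2 * (γ x * γ (x - y))) :=
    (le_abs_self _).trans (Real.abs_le_sqrt (by linarith))
  rwa [Real.sqrt_mul (by norm_num), Real.sqrt_sq (by norm_num)] at hsqrt

end IsVariogram

theorem stmt16 {d : ℕ} (γ : (Fin d → ℝ) → ℝ) (h : IsVariogram γ)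
    (M : ℝ) (hM : ∀ ξ, γ ξ ≤ M) (ξ η : Fin d → ℝ) :
    |γ ξ - γ η| ≤ γ (ξ - η) + 2 * Real.sqrt (M * γ (ξ - η)) ∧
    (γ (ξ - η) = 0 → γ ξ = γ η) := by
  have hsqrt (x : Fin d → ℝ) : √(γ x * γ (ξ - η)) ≤ √(M * γ (ξ - η)) :=
    Real.sqrt_le_sqrt (mul_le_mul_of_nonneg_right (hM x) (h.nonneg _))
  have hξη := h.add_sub_le_two_mul_sqrt ξ η
  have hηξ := h.add_sub_le_two_mul_sqrt η ξ
  rw [← h.map_sub_comm] at hηξ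
  have bound : |γ ξ - γ η| ≤ γ (ξ - η) + 2 * √(M * γ (ξ - η)) := by
    have := h.nonneg (ξ - η)
    exact abs_sub_le_iff.2 ⟨by linarith [hsqrt ξ], by linarith [hsqrt η]⟩
  refine ⟨bound, fun h0 => ?_⟩
  rw [h0, mul_zero, Real.sqrt_zero] at bound
  exact sub_eq_zero.1 (abs_nonpos_iff.1 (by linarith))
end
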